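/- arXiv:2012.07458 — 2 statements merged into one kernel-verified Lean document; each statement's English description precedes it below -/
import Mathlib

section
/- Optimality of the new metric: let A₀, F ∈ ℝ^{n×n} be invertible, and for symmetric positive definite M define Λ(M) = sqrt(λ_max((A₀^T)^{-1} F^T M F A₀^{-1})) and V(M) = Λ(M)^n · det(M)^{-1/2}. Then the metric M̂ = (A₀F^{-1})^T (A₀F^{-1}) minimizes V over all symmetric positive definite matrices M: V(M̂) = |det(F)|/|det(A₀)| ≤ V(M) for all symmetric positive definite M. -/
open Matrix

/-- The largest eigenvalue of a matrix, as the supremum of its real spectrum. -/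
noncomputable def lamMax {n : ℕ} (D : Matrix (Fin n) (Fin n) ℝ) : ℝ :=
  sSup (spectrum ℝ D)

/-- The stretching factor `Λ(M) = sqrt(λ_max((A₀ᵀ)⁻¹ Fᵀ M F A₀⁻¹))`. -/
noncomputable def SF {n : ℕ} (A₀ F M : Matrix (Fin n) (Fin n) ℝ) : ℝ :=
  Real.sqrt (lamMax ((A₀ᵀ)⁻¹ * Fᵀ * M * F * A₀⁻¹))

/-- The objective `V(M) = Λ(M)^n · det(M)^(-1/2)`, proportional to the volume
of the ellipsoid `B_M(x, Λ(M)δ₀)`. -/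
noncomputable def objV {n : ℕ} (A₀ F M : Matrix (Fin n) (Fin n) ℝ) : ℝ :=
  SF A₀ F M ^ n * M.det ^ (-(1 : ℝ) / 2)

lemma aux_det_le_lamMax_pow {n : ℕ} (hn : 0 < n) {N : Matrix (Fin n) (Fin n) ℝ}
    (hN : N.PosSemidef) : 0 ≤ lamMax N ∧ N.det ≤ lamMax N ^ n := by
  have hb : BddAbove (spectrum ℝ N) := N.finite_spectrum.bddAbove
  have hle : ∀ i, hN.1.eigenvalues i ≤ lamMax N := fun i =>
    le_csSup hb (hN.1.eigenvalues_mem_spectrum_real i)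
  have h0 : ∀ i, 0 ≤ hN.1.eigenvalues i := hN.eigenvalues_nonneg
  have i0 : Fin n := ⟨0, hn⟩
  refine ⟨le_trans (h0 i0) (hle i0), ?_⟩
  have hdet : N.det = ∏ i, hN.1.eigenvalues i := by
    simpa using hN.1.det_eq_prod_eigenvalues
  rw [hdet]
  calc ∏ i, hN.1.eigenvalues i ≤ ∏ _i : Fin n, lamMax N :=
        Finset.prod_le_prod (fun i _ => h0 i) (fun i _ => hle i)
    _ = lamMax N ^ n := by simp

lemma aux_rpow (d : ℝ) (hd : d ≠ 0) : (d * d) ^ (-(1 : ℝ) / 2) = |d|⁻¹ := by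
  have h : d * d = |d| ^ ((2 : ℕ) : ℝ) := by
    rw [Real.rpow_natCast, ← abs_mul_abs_self d]; ring
  rw [h, ← Real.rpow_mul (abs_nonneg d)]
  norm_num
  rw [Real.rpow_neg_one]

lemma aux_sqrt_pow (l : ℝ) (hl0 : 0 ≤ l) (n : ℕ) :
    Real.sqrt l ^ n = Real.sqrt (l ^ n) := by
  induction n with
  | zero => simp
  | succ k ih => rw [pow_succ, pow_succ, ih, ← Real.sqrt_mul (pow_nonneg hl0 k)]

/-- Optimality of the new metric: `M̂ = (A₀F⁻¹)ᵀ(A₀F⁻¹)` minimizes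
`V(M) = Λ(M)^n det(M)^(-1/2)` over symmetric positive definite `M`, with
`V(M̂) = |det F|/|det A₀|`. -/
theorem optimal_metric_minimizes {n : ℕ} (hn : 0 < n)
    (A₀ F : Matrix (Fin n) (Fin n) ℝ)
    (hA₀ : IsUnit A₀.det) (hF : IsUnit F.det) :
    objV A₀ F ((A₀ * F⁻¹)ᵀ * (A₀ * F⁻¹)) = |F.det| / |A₀.det| ∧
      ∀ M : Matrix (Fin n) (Fin n) ℝ, M.PosDef →
        objV A₀ F ((A₀ * F⁻¹)ᵀ * (A₀ * F⁻¹)) ≤ objV A₀ F M := by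
  haveI : Nonempty (Fin n) := ⟨⟨0, hn⟩⟩
  obtain ⟨C, hCdef⟩ : ∃ C : Matrix (Fin n) (Fin n) ℝ, C = F * A₀⁻¹ := ⟨_, rfl⟩
  have hdetA₀ : A₀.det ≠ 0 := hA₀.ne_zero
  have hdetF : F.det ≠ 0 := hF.ne_zero
  have hdetC : C.det = F.det * (A₀.det)⁻¹ := by
    rw [hCdef, det_mul, det_nonsing_inv, Ring.inverse_eq_inv']
  have hC : IsUnit C.det := by
    rw [hdetC]; exact isUnit_iff_ne_zero.2 (mul_ne_zero hdetF (inv_ne_zero hdetA₀))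
  have hCne : C.det ≠ 0 := hC.ne_zero
  have hCt : Cᵀ = (A₀ᵀ)⁻¹ * Fᵀ := by
    rw [hCdef, transpose_mul, transpose_nonsing_inv]
  have hCinv : C⁻¹ = A₀ * F⁻¹ := by
    rw [hCdef, Matrix.mul_inv_rev, Matrix.nonsing_inv_nonsing_inv _ hA₀]
  have hexpr : ∀ M : Matrix (Fin n) (Fin n) ℝ,
      (A₀ᵀ)⁻¹ * Fᵀ * M * F * A₀⁻¹ = Cᵀ * M * C := by
    intro M
    rw [← hCt, Matrix.mul_assoc (Cᵀ * M), ← hCdef]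
  have hCtdet : IsUnit Cᵀ.det := by rwa [det_transpose]
  have hMh : (A₀ * F⁻¹)ᵀ * (A₀ * F⁻¹) = (C⁻¹)ᵀ * C⁻¹ := by rw [hCinv]
  have key : Cᵀ * ((C⁻¹)ᵀ * C⁻¹) * C = 1 := by
    rw [← Matrix.mul_assoc, transpose_nonsing_inv, Matrix.mul_nonsing_inv _ hCtdet,
      Matrix.one_mul, Matrix.nonsing_inv_mul _ hC]
  have habsC : |C.det| = |F.det| / |A₀.det| := by
    rw [hdetC, abs_mul, abs_inv, div_eq_mul_inv]
  have hdetMh : ((C⁻¹)ᵀ * C⁻¹).det = C.det⁻¹ * C.det⁻¹ := by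
    rw [det_mul, det_transpose, det_nonsing_inv, Ring.inverse_eq_inv']
  have hval : objV A₀ F ((A₀ * F⁻¹)ᵀ * (A₀ * F⁻¹)) = |F.det| / |A₀.det| := by
    rw [objV, SF, lamMax, hexpr, hMh, key, spectrum.one_eq, csSup_singleton,
      Real.sqrt_one, one_pow, one_mul, hdetMh, aux_rpow _ (inv_ne_zero hCne),
      abs_inv, inv_inv, habsC]
  refine ⟨hval, ?_⟩
  intro M hM
  rw [hval, objV, SF, lamMax, hexpr]
  have hN : (Cᵀ * M * C).PosSemidef := by
    have := hM.posSemidef.conjTranspose_mul_mul_same C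
    rwa [conjTranspose_eq_transpose_of_trivial] at this
  obtain ⟨hl0, hdet⟩ := aux_det_le_lamMax_pow hn hN
  have hdetM : 0 < M.det := hM.det_pos
  have hdetN : (Cᵀ * M * C).det = M.det * C.det ^ 2 := by
    rw [det_mul, det_mul, det_transpose]; ring
  have hsd : 0 < Real.sqrt M.det := Real.sqrt_pos.2 hdetM
  have hrp : M.det ^ (-(1 : ℝ) / 2) = (Real.sqrt M.det)⁻¹ := by
    rw [neg_div, Real.rpow_neg hdetM.le, Real.sqrt_eq_rpow]
  have hkey : Real.sqrt M.det * |C.det| ≤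
      Real.sqrt (lamMax (Cᵀ * M * C)) ^ n := by
    have h2 : Real.sqrt (M.det * C.det ^ 2) ≤ Real.sqrt (lamMax (Cᵀ * M * C) ^ n) :=
      Real.sqrt_le_sqrt (hdetN ▸ hdet)
    rwa [Real.sqrt_mul hdetM.le, Real.sqrt_sq_eq_abs, ← aux_sqrt_pow _ hl0] at h2
  rw [hrp, ← habsC, ← div_eq_mul_inv, le_div_iff₀ hsd]
  calc |C.det| * Real.sqrt M.det = Real.sqrt M.det * |C.det| := by ring
    _ ≤ _ := hkey
end

section
/- Volume of the optimal reachset: with A₀, F invertible and M̂ = (A₀F^{-1})^T(A₀F^{-1}), the ellipsoid B_{M̂}(c, δ₀) has Lebesgue volume ω_n δ₀^n |det(F)| / |det(A₀)|, which is the minimum over all symmetric positive definite M of vol(B_M(c, Λ(M)δ₀)) where Λ(M) = sqrt(λ_max((A₀^T)^{-1} F^T M F A₀^{-1})). -/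
open Matrix

/-- The ellipsoid `B_M(c, r) = {y | (y−c)ᵀ M (y−c) ≤ r²}`. -/
def mball {n : ℕ} (M : Matrix (Fin n) (Fin n) ℝ) (c : Fin n → ℝ) (r : ℝ) :
    Set (Fin n → ℝ) :=
  {y | (y - c) ⬝ᵥ M.mulVec (y - c) ≤ r ^ 2}

open MeasureTheory in
/-- Volume of the ellipsoid `B_{GᵀG}(c, r)`. -/
theorem vol_mball_aux {n : ℕ} (G : Matrix (Fin n) (Fin n) ℝ) (hG : G.det ≠ 0)
    (c : Fin n → ℝ) {r : ℝ} (hr : 0 < r) :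
    volume (mball (Gᵀ * G) c r) =
      ENNReal.ofReal (|G.det|⁻¹ * r ^ n) *
        volume {y : Fin n → ℝ | ∑ i, y i ^ 2 ≤ 1} := by
  have quad : ∀ x : Fin n → ℝ, x ⬝ᵥ (Gᵀ * G).mulVec x = ∑ i, (G.mulVec x) i ^ 2 := by
    intro x
    rw [← mulVec_mulVec, dotProduct_mulVec, vecMul_transpose]
    simp [dotProduct, pow_two]
  have hset : mball (Gᵀ * G) c r
      = (fun y : Fin n → ℝ => -c + y) ⁻¹'
          (Matrix.toLin' G ⁻¹' {y : Fin n → ℝ | ∑ i, y i ^ 2 ≤ r ^ 2}) := by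
    ext y
    simp only [mball, Set.mem_setOf_eq, Set.mem_preimage, Matrix.toLin'_apply, quad,
      neg_add_eq_sub]
  have hdet : LinearMap.det (Matrix.toLin' G) ≠ 0 := by
    rwa [LinearMap.det_toLin']
  rw [hset, measure_preimage_add, Measure.addHaar_preimage_linearMap volume hdet,
    LinearMap.det_toLin']
  have hS : volume {y : Fin n → ℝ | ∑ i, y i ^ 2 ≤ r ^ 2} =
      ENNReal.ofReal (r ^ n) * volume {y : Fin n → ℝ | ∑ i, y i ^ 2 ≤ 1} := by
    have hset2 : {y : Fin n → ℝ | ∑ i, y i ^ 2 ≤ r ^ 2}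
        = (r⁻¹ • ·) ⁻¹' {y : Fin n → ℝ | ∑ i, y i ^ 2 ≤ 1} := by
      ext y
      simp only [Set.mem_setOf_eq, Set.mem_preimage, Pi.smul_apply, smul_eq_mul, mul_pow,
        ← Finset.mul_sum, inv_pow]
      rw [inv_mul_le_iff₀ (by positivity), mul_one]
    rw [hset2, Measure.addHaar_preimage_smul volume (inv_ne_zero hr.ne'), Module.finrank_pi]
    congr 2
    rw [Fintype.card_fin, inv_pow, abs_of_pos (by positivity), inv_inv]
  rw [hS, ← mul_assoc, ← ENNReal.ofReal_mul (by positivity), abs_inv]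

/-- Basic facts about the largest eigenvalue of a positive semidefinite matrix with
positive determinant. -/
theorem lamMax_facts_aux {n : ℕ} (hn : 0 < n) {D : Matrix (Fin n) (Fin n) ℝ}
    (hD : D.PosSemidef) (hdet : 0 < D.det) :
    0 < lamMax D ∧ D.det ≤ lamMax D ^ n := by
  haveI : Nonempty (Fin n) := ⟨⟨0, hn⟩⟩
  have hH := hD.isHermitian
  have hlam : lamMax D = sSup (Set.range hH.eigenvalues) := by
    rw [lamMax, hH.spectrum_real_eq_range_eigenvalues]
  have hb : BddAbove (Set.range hH.eigenvalues) := (Set.finite_range _).bddAbove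
  have hle : ∀ i, hH.eigenvalues i ≤ lamMax D := fun i => by
    rw [hlam]; exact le_csSup hb ⟨i, rfl⟩
  have h0 : ∀ i, 0 ≤ hH.eigenvalues i := hD.eigenvalues_nonneg
  have hprod : D.det ≤ lamMax D ^ n := by
    rw [hH.det_eq_prod_eigenvalues]
    calc ∏ i, hH.eigenvalues i ≤ ∏ _i : Fin n, lamMax D :=
          Finset.prod_le_prod (fun i _ => h0 i) (fun i _ => hle i)
      _ = lamMax D ^ n := by simp
  refine ⟨?_, hprod⟩
  by_contra h
  push_neg at h
  have hz : lamMax D = 0 := le_antisymm h ((h0 (Classical.arbitrary _)).trans (hle _))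
  rw [hz, zero_pow hn.ne'] at hprod
  linarith

/-- Conjugate transpose equals transpose for real matrices. -/
theorem conjTranspose_eq_transpose_real {m : Type*} (A : Matrix m m ℝ) : Aᴴ = Aᵀ := by
  ext i j
  simp [conjTranspose_apply]

/-- Volume of the optimal reachset: with `M̂ = (A₀F⁻¹)ᵀ(A₀F⁻¹)` for invertible
`A₀, F`, the ellipsoid `B_{M̂}(c, δ₀)` has Lebesgue volume
`ω_n δ₀ⁿ |det F| / |det A₀|` (with `ω_n` the Euclidean unit-ball volume), and
this is the minimum of `vol(B_M(c, Λ(M)δ₀))` over all symmetric positive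
definite `M`, where `Λ(M) = sqrt(λ_max((A₀ᵀ)⁻¹ Fᵀ M F A₀⁻¹))`. -/
theorem volume_optimal_reachset {n : ℕ} (hn : 0 < n)
    (A₀ F : Matrix (Fin n) (Fin n) ℝ)
    (hA₀ : IsUnit A₀.det) (hF : IsUnit F.det)
    (c : Fin n → ℝ) (δ₀ : ℝ) (hδ₀ : 0 < δ₀) :
    MeasureTheory.volume (mball ((A₀ * F⁻¹)ᵀ * (A₀ * F⁻¹)) c δ₀) =
        MeasureTheory.volume {y : Fin n → ℝ | ∑ i, y i ^ 2 ≤ 1} *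
          ENNReal.ofReal (δ₀ ^ n * |F.det| / |A₀.det|) ∧
      ∀ M : Matrix (Fin n) (Fin n) ℝ, M.PosDef →
        MeasureTheory.volume (mball ((A₀ * F⁻¹)ᵀ * (A₀ * F⁻¹)) c δ₀) ≤
          MeasureTheory.volume
            (mball M c
              (Real.sqrt (lamMax ((A₀ᵀ)⁻¹ * Fᵀ * M * F * A₀⁻¹)) * δ₀)) := by
  have hAdet : A₀.det ≠ 0 := hA₀.ne_zero
  have hFdet : F.det ≠ 0 := hF.ne_zero
  have ha : (0:ℝ) < |A₀.det| := abs_pos.mpr hAdet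
  have hf : (0:ℝ) < |F.det| := abs_pos.mpr hFdet
  have hGdet : (A₀ * F⁻¹).det ≠ 0 := by
    rw [Matrix.det_mul, Matrix.det_nonsing_inv, Ring.inverse_eq_inv']
    exact mul_ne_zero hAdet (inv_ne_zero hFdet)
  have hGabs : |(A₀ * F⁻¹).det| = |A₀.det| / |F.det| := by
    rw [Matrix.det_mul, Matrix.det_nonsing_inv, Ring.inverse_eq_inv', abs_mul, abs_inv,
      div_eq_mul_inv]
  have hLHS := vol_mball_aux (A₀ * F⁻¹) hGdet c hδ₀
  constructor
  · rw [hLHS, mul_comm]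
    congr 1
    rw [hGabs]
    field_simp
  · intro M hM
    set L := (open scoped MatrixOrder in CFC.sqrt M) with hLdef
    have hL : L.PosSemidef := by
      open scoped MatrixOrder in exact Matrix.nonneg_iff_posSemidef.mp (CFC.sqrt_nonneg M)
    have hLL : L * L = M := by
      open scoped MatrixOrder in
        exact CFC.sqrt_mul_sqrt_self M (Matrix.nonneg_iff_posSemidef.mpr hM.posSemidef)
    have hLt : Lᵀ = L := by
      rw [← conjTranspose_eq_transpose_real, hL.isHermitian]
    have hdL2 : L.det * L.det = M.det := by rw [← Matrix.det_mul, hLL]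
    have hMdet : (0:ℝ) < M.det := hM.det_pos
    have hLdet : L.det ≠ 0 := by
      intro h; rw [h, zero_mul] at hdL2; linarith
    have hl : (0:ℝ) < |L.det| := abs_pos.mpr hLdet
    set Q := L * F * A₀⁻¹ with hQdef
    set D := (A₀ᵀ)⁻¹ * Fᵀ * M * F * A₀⁻¹ with hDdef
    have hDQ : D = Qᵀ * Q := by
      rw [hDdef, hQdef, ← hLL]
      simp only [Matrix.transpose_mul, Matrix.transpose_nonsing_inv, hLt, Matrix.mul_assoc]
    have hQdet : Q.det ≠ 0 := by
      rw [hQdef, Matrix.det_mul, Matrix.det_mul, Matrix.det_nonsing_inv, Ring.inverse_eq_inv']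
      exact mul_ne_zero (mul_ne_zero hLdet hFdet) (inv_ne_zero hAdet)
    have hDpsd : D.PosSemidef := by
      rw [hDQ, ← conjTranspose_eq_transpose_real]
      exact Matrix.posSemidef_conjTranspose_mul_self Q
    have hDdet : D.det = Q.det * Q.det := by
      rw [hDQ, Matrix.det_mul, Matrix.det_transpose]
    have hDdetpos : 0 < D.det := by
      rw [hDdet]
      exact mul_self_pos.mpr hQdet
    obtain ⟨hLamPos, hLamBd⟩ := lamMax_facts_aux hn hDpsd hDdetpos
    set s := Real.sqrt (lamMax D) with hsdef
    have hspos : 0 < s := Real.sqrt_pos.mpr hLamPos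
    have hrpos : 0 < s * δ₀ := mul_pos hspos hδ₀
    have hRHS : MeasureTheory.volume (mball M c (s * δ₀)) =
        ENNReal.ofReal (|L.det|⁻¹ * (s * δ₀) ^ n) *
          MeasureTheory.volume {y : Fin n → ℝ | ∑ i, y i ^ 2 ≤ 1} := by
      rw [show M = Lᵀ * L by rw [hLt, hLL]]
      exact vol_mball_aux L hLdet c hrpos
    rw [hLHS, hRHS]
    refine mul_le_mul_left (ENNReal.ofReal_le_ofReal ?_) _
    -- key eigenvalue bound: |det Q| ≤ s ^ n
    have hsn : s ^ n * s ^ n = lamMax D ^ n := by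
      rw [← mul_pow, hsdef, Real.mul_self_sqrt hLamPos.le]
    have hkey : |Q.det| ≤ s ^ n := by
      have h1 : |Q.det| ^ 2 ≤ (s ^ n) ^ 2 := by
        rw [sq_abs, pow_two, pow_two, hsn, ← hDdet]
        exact hLamBd
      nlinarith [abs_nonneg Q.det, pow_nonneg hspos.le n]
    have hQabs : |Q.det| = |L.det| * |F.det| / |A₀.det| := by
      rw [hQdef, Matrix.det_mul, Matrix.det_mul, Matrix.det_nonsing_inv, Ring.inverse_eq_inv',
        abs_mul, abs_mul, abs_inv, div_eq_mul_inv]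
    have hkey' : |L.det| * |F.det| ≤ s ^ n * |A₀.det| := by
      rw [hQabs, div_le_iff₀ ha] at hkey
      exact hkey
    rw [hGabs, inv_div, mul_pow, div_mul_eq_mul_div, inv_mul_eq_div, div_le_div_iff₀ ha hl]
    nlinarith [mul_le_mul_of_nonneg_right hkey' (pow_nonneg hδ₀.le n)]
end
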